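/- arXiv:2601.07572 — 2 statements merged into one kernel-verified Lean document; each statement's English description precedes it below -/
import Mathlib

section
/- Let A be a C*-algebra, I ⊆ A a closed two-sided ideal, and H a right Hilbert A-module. Set HI := closure of the span of {ξ·a : ξ ∈ H, a ∈ I}. Then the quotient Banach space H/HI carries a right Hilbert A/I-module structure with inner product ⟨ξ + HI, η + HI⟩ := ⟨ξ, η⟩_A + I, and the induced Hilbert module norm equals the Banach space quotient norm. -/
/-- A (right) Hilbert `A`-module over a C*-algebra `A`: a complete normed
complex vector space with a right `A`-action and an `A`-valued inner product. -/
structure RightHilbertModule (A : Type*) [CStarAlgebra A] [PartialOrder A]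
    [StarOrderedRing A] where
  carrier : Type
  [nacg : NormedAddCommGroup carrier]
  [nsp : NormedSpace ℂ carrier]
  [cs : CompleteSpace carrier]
  rsmul : carrier → A → carrier
  inner : carrier → carrier → A
  inner_add_left : ∀ x y z : carrier, inner (x + y) z = inner x z + inner y z
  inner_smul_left : ∀ (c : ℂ) (x y : carrier), inner (c • x) y = star c • inner x y
  inner_rsmul_right : ∀ (x y : carrier) (a : A), inner x (rsmul y a) = inner x y * a
  star_inner : ∀ x y : carrier, star (inner x y) = inner y x
  inner_self_nonneg : ∀ x : carrier, 0 ≤ inner x x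
  inner_self_definite : ∀ x : carrier, inner x x = 0 → x = 0
  norm_sq_eq : ∀ x : carrier, ‖x‖ ^ 2 = ‖inner x x‖
  rsmul_add_left : ∀ (x y : carrier) (a : A), rsmul (x + y) a = rsmul x a + rsmul y a
  rsmul_add_right : ∀ (x : carrier) (a b : A), rsmul x (a + b) = rsmul x a + rsmul x b
  rsmul_mul : ∀ (x : carrier) (a b : A), rsmul (rsmul x a) b = rsmul x (a * b)
  rsmul_csmul : ∀ (c : ℂ) (x : carrier) (a : A), rsmul (c • x) a = c • rsmul x a

attribute [instance] RightHilbertModule.nacg RightHilbertModule.nsp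
  RightHilbertModule.cs

/-- The closed submodule `H·I` of a Hilbert module generated by products with
elements of an ideal `I ⊆ A`. -/
def RightHilbertModule.idealSubmodule {A : Type*} [CStarAlgebra A] [PartialOrder A]
    [StarOrderedRing A] (M : RightHilbertModule A) (I : Submodule ℂ A) :
    Submodule ℂ M.carrier :=
  (Submodule.span ℂ {z : M.carrier | ∃ x : M.carrier, ∃ a ∈ I, z = M.rsmul x a}).topologicalClosure


section Core
variable {A : Type*} [CStarAlgebra A] [PartialOrder A] [StarOrderedRing A]

lemma core_aux {I : Submodule ℂ A}
    (hIright : ∀ a x : A, x ∈ I → x * a ∈ I)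
    {b : A} (hb : 0 ≤ b) (hbI : b ∈ I) (n : ℕ) (hn : 0 < n) :
    ∃ e : A, e ∈ I ∧ 0 ≤ e ∧ ‖e‖ ≤ 1 ∧ IsSelfAdjoint e ∧ ‖(1 : A) - e‖ ≤ 1 ∧
      ‖((1 : A) - e) * b * ((1 : A) - e)‖ ≤ (n : ℝ)⁻¹ := by
  have hsp : ∀ t ∈ spectrum ℝ b, 0 ≤ t := fun t ht => spectrum_nonneg_of_nonneg hb ht
  have hb' : IsSelfAdjoint b := IsSelfAdjoint.of_nonneg hb
  have hnR : (0:ℝ) < (n:ℝ) := by exact_mod_cast hn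
  have hden : ∀ t ∈ spectrum ℝ b, 1 + (n:ℝ)*t ≠ 0 := fun t ht => by
    have := hsp t ht; positivity
  have hcont1 : ContinuousOn (fun t : ℝ => (1 + (n:ℝ)*t)⁻¹) (spectrum ℝ b) :=
    ((continuous_const.add (continuous_const.mul continuous_id)).continuousOn).inv₀ hden
  have hcontc : ContinuousOn (fun t : ℝ => (n:ℝ) * (1 + (n:ℝ)*t)⁻¹) (spectrum ℝ b) :=
    continuousOn_const.mul hcont1
  have hcontf : ContinuousOn (fun t : ℝ => t * ((n:ℝ) * (1 + (n:ℝ)*t)⁻¹)) (spectrum ℝ b) :=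
    continuousOn_id.mul hcontc
  have hid : ContinuousOn (fun t : ℝ => t) (spectrum ℝ b) := continuous_id.continuousOn
  set e : A := cfc (fun t : ℝ => t * ((n:ℝ) * (1 + (n:ℝ)*t)⁻¹)) b with he
  have heb : e = b * cfc (fun t : ℝ => (n:ℝ) * (1 + (n:ℝ)*t)⁻¹) b := by
    rw [he, cfc_mul (fun t : ℝ => t) _ b hid hcontc, cfc_id' ℝ b]
  have heI : e ∈ I := heb ▸ hIright (cfc (fun t : ℝ => (n:ℝ) * (1 + (n:ℝ)*t)⁻¹) b) b hbI
  have hfnn : ∀ t ∈ spectrum ℝ b, 0 ≤ t * ((n:ℝ) * (1 + (n:ℝ)*t)⁻¹) := fun t ht => by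
    have := hsp t ht; positivity
  have hfle1 : ∀ t ∈ spectrum ℝ b, t * ((n:ℝ) * (1 + (n:ℝ)*t)⁻¹) ≤ 1 := fun t ht => by
    have h1 := hsp t ht
    have h2 : (0:ℝ) < 1 + (n:ℝ)*t := by positivity
    have h4 : t * ((n:ℝ) * (1 + (n:ℝ)*t)⁻¹) = ((n:ℝ)*t) / (1 + (n:ℝ)*t) := by
      field_simp
    rw [h4, div_le_one h2]; linarith
  have hepos : 0 ≤ e := cfc_nonneg hfnn
  have hesa : IsSelfAdjoint e := IsSelfAdjoint.of_nonneg hepos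
  have hene : ‖e‖ ≤ 1 := norm_cfc_le zero_le_one fun t ht => by
    rw [Real.norm_eq_abs, abs_of_nonneg (hfnn t ht)]; exact hfle1 t ht
  have h1e : (1:A) - e = cfc (fun t : ℝ => 1 - t * ((n:ℝ) * (1 + (n:ℝ)*t)⁻¹)) b := by
    rw [he, cfc_sub (fun _ : ℝ => (1:ℝ)) _ b continuousOn_const hcontf, cfc_const_one ℝ b]
  have hcont1f : ContinuousOn (fun t : ℝ => 1 - t * ((n:ℝ) * (1 + (n:ℝ)*t)⁻¹)) (spectrum ℝ b) :=
    continuousOn_const.sub hcontf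
  have h1ene : ‖(1:A) - e‖ ≤ 1 := by
    rw [h1e]
    refine norm_cfc_le zero_le_one fun t ht => ?_
    rw [Real.norm_eq_abs, abs_le]
    exact ⟨by linarith [hfle1 t ht], by linarith [hfnn t ht]⟩
  have hkey : ((1:A) - e) * b * ((1:A) - e)
      = cfc (fun t : ℝ => (1 - t * ((n:ℝ) * (1 + (n:ℝ)*t)⁻¹)) * t
          * (1 - t * ((n:ℝ) * (1 + (n:ℝ)*t)⁻¹))) b := by
    rw [cfc_mul (fun t : ℝ => (1 - t * ((n:ℝ) * (1 + (n:ℝ)*t)⁻¹)) * t) _ b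
      (hcont1f.mul hid) hcont1f,
      cfc_mul (fun t : ℝ => 1 - t * ((n:ℝ) * (1 + (n:ℝ)*t)⁻¹)) (fun t : ℝ => t) b hcont1f hid,
      cfc_id' ℝ b, h1e]
  have hbound : ‖((1:A) - e) * b * ((1:A) - e)‖ ≤ (n : ℝ)⁻¹ := by
    rw [hkey]
    refine norm_cfc_le (by positivity) fun t ht => ?_
    have h1 := hsp t ht
    have h2 : (0:ℝ) < 1 + (n:ℝ)*t := by positivity
    have h3 : 1 - t * ((n:ℝ) * (1 + (n:ℝ)*t)⁻¹) = (1 + (n:ℝ)*t)⁻¹ := by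
      field_simp
      try ring
    rw [h3, Real.norm_eq_abs, abs_of_nonneg (by positivity)]
    have h5 : (1 + (n:ℝ)*t)⁻¹ * t ≤ (n:ℝ)⁻¹ := by
      rw [show (1 + (n:ℝ)*t)⁻¹ * t = t / (1 + (n:ℝ)*t) by ring,
        show ((n:ℝ))⁻¹ = 1 / (n:ℝ) by ring, div_le_div_iff₀ h2 hnR]
      linarith
    have h6 : (1 + (n:ℝ)*t)⁻¹ ≤ 1 := inv_le_one_of_one_le₀ (le_add_of_nonneg_right (by positivity))
    calc (1 + (n:ℝ)*t)⁻¹ * t * (1 + (n:ℝ)*t)⁻¹ ≤ (n:ℝ)⁻¹ * 1 :=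
      mul_le_mul h5 h6 (by positivity) (by positivity)
    _ = (n:ℝ)⁻¹ := by ring
  exact ⟨e, heI, hepos, hene, hesa, h1ene, hbound⟩

end Core

section Helpers
variable {A : Type*} [CStarAlgebra A] [PartialOrder A] [StarOrderedRing A]

lemma exists_inv_lt {ε : ℝ} (hε : 0 < ε) : ∃ n : ℕ, 0 < n ∧ (n:ℝ)⁻¹ < ε := by
  obtain ⟨n, hn⟩ := exists_nat_gt ε⁻¹
  have hn0 : (0:ℝ) < n := (inv_pos.mpr hε).trans hn
  refine ⟨n, by exact_mod_cast hn0, ?_⟩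
  rw [show ε = (ε⁻¹)⁻¹ by rw [inv_inv]]
  exact inv_strictAnti₀ (inv_pos.mpr hε) hn

lemma star_mem_of_closed {I : Submodule ℂ A} (hIclosed : IsClosed (I : Set A))
    (hIleft : ∀ a x : A, x ∈ I → a * x ∈ I)
    (hIright : ∀ a x : A, x ∈ I → x * a ∈ I)
    {a : A} (ha : a ∈ I) : star a ∈ I := by
  rw [← SetLike.mem_coe, ← hIclosed.closure_eq]
  apply Metric.mem_closure_iff.mpr
  intro ε hε
  obtain ⟨n, hn0, hinv⟩ := exists_inv_lt (show (0:ℝ) < ε^2 by positivity)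
  have hbI : star a * a ∈ I := hIleft (star a) a ha
  have hb : 0 ≤ star a * a := star_mul_self_nonneg a
  obtain ⟨e, heI, _, _, hesa, _, hbound⟩ := core_aux hIright hb hbI n hn0
  refine ⟨e * star a, hIright (star a) e heI, ?_⟩
  rw [dist_eq_norm]
  have h1 : star a - e * star a = star (a * ((1:A) - e)) := by
    rw [star_mul, ((IsSelfAdjoint.one (R := A)).sub hesa).star_eq]; noncomm_ring
  have h2 : ‖a * ((1:A) - e)‖^2 = ‖((1:A) - e) * (star a * a) * ((1:A) - e)‖ := by
    rw [sq, ← CStarRing.norm_star_mul_self]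
    congr 1
    rw [star_mul, ((IsSelfAdjoint.one (R := A)).sub hesa).star_eq]
    noncomm_ring
  rw [h1, norm_star]
  nlinarith [norm_nonneg (a * ((1:A) - e)), hε]

end Helpers
section ModuleHelpers
variable {A : Type*} [CStarAlgebra A] [PartialOrder A] [StarOrderedRing A]
  (M : RightHilbertModule A)

namespace RightHilbertModule

lemma inner_zero_left (y : M.carrier) : M.inner 0 y = 0 := by
  have h := M.inner_smul_left 0 0 y
  simpa using h

lemma inner_zero_right (x : M.carrier) : M.inner x 0 = 0 := by
  rw [← M.star_inner, inner_zero_left, star_zero]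

lemma inner_neg_left (x y : M.carrier) : M.inner (-x) y = -M.inner x y := by
  rw [← neg_one_smul ℂ x, M.inner_smul_left]
  simp

lemma inner_sub_left (x y z : M.carrier) :
    M.inner (x - y) z = M.inner x z - M.inner y z := by
  rw [sub_eq_add_neg, M.inner_add_left, inner_neg_left, ← sub_eq_add_neg]

lemma inner_add_right (x y z : M.carrier) :
    M.inner x (y + z) = M.inner x y + M.inner x z := by
  rw [← M.star_inner, M.inner_add_left, star_add, M.star_inner, M.star_inner]

lemma inner_sub_right (x y z : M.carrier) :
    M.inner x (y - z) = M.inner x y - M.inner x z := by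
  rw [← M.star_inner, inner_sub_left, star_sub, M.star_inner, M.star_inner]

lemma inner_smul_right (c : ℂ) (x y : M.carrier) :
    M.inner x (c • y) = c • M.inner x y := by
  rw [← M.star_inner, M.inner_smul_left, star_smul, star_star, M.star_inner]

lemma inner_rsmul_left (x y : M.carrier) (a : A) :
    M.inner (M.rsmul x a) y = star a * M.inner x y := by
  rw [← M.star_inner, M.inner_rsmul_right, star_mul, M.star_inner]

lemma rsmul_zero_right (x : M.carrier) : M.rsmul x 0 = 0 := by
  have h := M.rsmul_add_right x 0 0
  rw [add_zero] at h
  exact (add_eq_left.mp h.symm)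

lemma rsmul_zero_left (a : A) : M.rsmul 0 a = 0 := by
  have h := M.rsmul_add_left 0 0 a
  rw [add_zero] at h
  exact (add_eq_left.mp h.symm)

lemma rsmul_neg_right (x : M.carrier) (a : A) : M.rsmul x (-a) = -M.rsmul x a := by
  have h : M.rsmul x a + M.rsmul x (-a) = 0 := by
    rw [← M.rsmul_add_right, add_neg_cancel, rsmul_zero_right]
  exact eq_neg_of_add_eq_zero_right h

lemma rsmul_sub_left (x y : M.carrier) (a : A) :
    M.rsmul (x - y) a = M.rsmul x a - M.rsmul y a := by
  have hneg : M.rsmul (-y) a = -M.rsmul y a := by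
    rw [← neg_one_smul ℂ y, M.rsmul_csmul]; simp
  rw [sub_eq_add_neg, M.rsmul_add_left, hneg, ← sub_eq_add_neg]

lemma rsmul_sub_right (x : M.carrier) (a b : A) :
    M.rsmul x (a - b) = M.rsmul x a - M.rsmul x b := by
  rw [sub_eq_add_neg, M.rsmul_add_right, rsmul_neg_right, ← sub_eq_add_neg]

lemma inner_self_star (x : M.carrier) : star (M.inner x x) = M.inner x x := M.star_inner x x

lemma norm_inner_le_of_unit (x y : M.carrier) :
    ‖M.inner x y‖ ≤ (‖x‖ + ‖y‖)^2 := by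
  have expand : ∀ c : ℂ, M.inner (x + c • y) (x + c • y)
      = M.inner x x + c • M.inner x y + (star c) • M.inner y x
        + (c * star c) • M.inner y y := by
    intro c
    simp only [M.inner_add_left, M.inner_add_right, M.inner_smul_left,
      M.inner_smul_right, smul_smul, smul_add]
    module
  have key : (4:ℂ) • M.inner x y
      = M.inner (x + (1:ℂ) • y) (x + (1:ℂ) • y)
        + (-1:ℂ) • M.inner (x + (-1:ℂ) • y) (x + (-1:ℂ) • y)
        + (-Complex.I) • M.inner (x + Complex.I • y) (x + Complex.I • y)
        + Complex.I • M.inner (x + (-Complex.I) • y) (x + (-Complex.I) • y) := by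
    rw [expand 1, expand (-1), expand Complex.I, expand (-Complex.I)]
    simp only [star_one, star_neg, Complex.star_def, Complex.conj_I,
      mul_one, one_mul, neg_neg, neg_mul, mul_neg, Complex.I_mul_I]
    match_scalars <;> (try ring) <;> (simp only [Complex.I_sq]; ring)
  have hb : ∀ c : ℂ, ‖c‖ = 1 → ‖M.inner (x + c • y) (x + c • y)‖ ≤ (‖x‖ + ‖y‖)^2 := by
    intro c hc
    rw [← M.norm_sq_eq]
    have : ‖x + c • y‖ ≤ ‖x‖ + ‖y‖ := by
      calc ‖x + c • y‖ ≤ ‖x‖ + ‖c • y‖ := norm_add_le _ _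
        _ = ‖x‖ + ‖y‖ := by rw [norm_smul, hc, one_mul]
    exact pow_le_pow_left₀ (norm_nonneg _) this 2
  have h4 : ‖(4:ℂ) • M.inner x y‖ = 4 * ‖M.inner x y‖ := by
    rw [norm_smul]; norm_num
  have hIn : ‖Complex.I‖ = 1 := Complex.norm_I
  have h1n : ‖(1:ℂ)‖ = 1 := by norm_num
  have hm1n : ‖(-1:ℂ)‖ = 1 := by norm_num
  have hmIn : ‖(-Complex.I:ℂ)‖ = 1 := by rw [norm_neg]; exact Complex.norm_I
  have hadd4 : ∀ a b c d : A, ‖a + b + c + d‖ ≤ ‖a‖ + ‖b‖ + ‖c‖ + ‖d‖ := by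
    intro a b c d
    calc ‖a + b + c + d‖ ≤ ‖a + b + c‖ + ‖d‖ := norm_add_le _ _
      _ ≤ ‖a + b‖ + ‖c‖ + ‖d‖ := by gcongr; exact norm_add_le _ _
      _ ≤ ‖a‖ + ‖b‖ + ‖c‖ + ‖d‖ := by gcongr; exact norm_add_le _ _
  have hbig : 4 * ‖M.inner x y‖ ≤ 4 * (‖x‖ + ‖y‖)^2 := by
    rw [← h4, key]
    refine le_trans (hadd4 _ _ _ _) ?_
    rw [norm_smul, norm_smul, norm_smul, hm1n, hmIn, hIn, one_mul, one_mul, one_mul]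
    have b1 := hb 1 h1n
    have b2 := hb (-1) hm1n
    have b3 := hb Complex.I hIn
    have b4 := hb (-Complex.I) hmIn
    linarith
  linarith

lemma norm_inner_le (x y : M.carrier) : ‖M.inner x y‖ ≤ 4 * ‖x‖ * ‖y‖ := by
  by_cases hx : x = 0
  · subst hx; rw [inner_zero_left]; simp
  by_cases hy : y = 0
  · subst hy; rw [inner_zero_right]; simp
  have hxn : 0 < ‖x‖ := norm_pos_iff.mpr hx
  have hyn : 0 < ‖y‖ := norm_pos_iff.mpr hy
  set t : ℝ := ‖y‖ / ‖x‖ with ht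
  have htpos : 0 < t := div_pos hyn hxn
  have hsc : M.inner ((t:ℂ) • x) y = (t:ℂ) • M.inner x y := by
    rw [M.inner_smul_left]
    congr 1
    simp [Complex.star_def, Complex.conj_ofReal]
  have hnsc : ‖M.inner ((t:ℂ) • x) y‖ = t * ‖M.inner x y‖ := by
    rw [hsc, norm_smul, Complex.norm_real, Real.norm_eq_abs, abs_of_pos htpos]
  have hb := norm_inner_le_of_unit M ((t:ℂ) • x) y
  rw [hnsc] at hb
  have hnx : ‖(t:ℂ) • x‖ = ‖y‖ := by
    rw [norm_smul, Complex.norm_real, Real.norm_eq_abs, abs_of_pos htpos, ht,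
      div_mul_cancel₀ _ hxn.ne']
  rw [hnx] at hb
  -- t * ‖inner x y‖ ≤ (2‖y‖)^2 = 4‖y‖^2 ; divide by t = ‖y‖/‖x‖
  have h2 : t * ‖M.inner x y‖ ≤ 4 * ‖y‖^2 := by nlinarith
  rw [ht, div_mul_eq_mul_div, div_le_iff₀ hxn] at h2
  nlinarith

lemma norm_rsmul_le (x : M.carrier) (a : A) : ‖M.rsmul x a‖ ≤ ‖x‖ * ‖a‖ := by
  have h := M.norm_sq_eq (M.rsmul x a)
  have h2 : M.inner (M.rsmul x a) (M.rsmul x a) = star a * M.inner x x * a := by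
    rw [M.inner_rsmul_right, inner_rsmul_left]
  rw [h2] at h
  have h3 : ‖star a * M.inner x x * a‖ ≤ ‖a‖ * ‖M.inner x x‖ * ‖a‖ := by
    calc ‖star a * M.inner x x * a‖ ≤ ‖star a * M.inner x x‖ * ‖a‖ := norm_mul_le _ _
      _ ≤ (‖star a‖ * ‖M.inner x x‖) * ‖a‖ := by gcongr; exact norm_mul_le _ _
      _ = ‖a‖ * ‖M.inner x x‖ * ‖a‖ := by rw [norm_star]
  have h4 : ‖M.inner x x‖ = ‖x‖^2 := (M.norm_sq_eq x).symm
  rw [h4] at h3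
  have h5 : ‖M.rsmul x a‖^2 ≤ (‖x‖ * ‖a‖)^2 := by nlinarith
  by_contra hlt
  push_neg at hlt
  nlinarith [norm_nonneg (M.rsmul x a), mul_nonneg (norm_nonneg x) (norm_nonneg a)]

lemma norm_sub_rsmul (ξ : M.carrier) (e : A) (he : IsSelfAdjoint e) :
    ‖ξ - M.rsmul ξ e‖^2 = ‖((1:A) - e) * M.inner ξ ξ * ((1:A) - e)‖ := by
  rw [M.norm_sq_eq]
  congr 1
  rw [inner_sub_left, inner_sub_right, inner_sub_right, M.inner_rsmul_right,
    inner_rsmul_left, M.inner_rsmul_right, inner_rsmul_left, he.star_eq]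
  noncomm_ring

end RightHilbertModule
end ModuleHelpers
section IdealSub
variable {A : Type*} [CStarAlgebra A] [PartialOrder A] [StarOrderedRing A]
  (M : RightHilbertModule A) {I : Submodule ℂ A}

namespace RightHilbertModule

lemma mem_idealSubmodule_of_gen (x : M.carrier) {a : A} (ha : a ∈ I) :
    M.rsmul x a ∈ M.idealSubmodule I :=
  Submodule.le_topologicalClosure _ (Submodule.subset_span ⟨x, a, ha, rfl⟩)

lemma idealSubmodule_isClosed :
    IsClosed ((M.idealSubmodule I : Submodule ℂ M.carrier) : Set M.carrier) :=
  Submodule.isClosed_topologicalClosure _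

lemma rsmul_mem_idealSubmodule
    (hIright : ∀ a x : A, x ∈ I → x * a ∈ I) {z : M.carrier}
    (hz : z ∈ M.idealSubmodule I) (a : A) :
    M.rsmul z a ∈ M.idealSubmodule I := by
  let L0 : M.carrier →ₗ[ℂ] M.carrier :=
    { toFun := fun z => M.rsmul z a
      map_add' := fun u v => M.rsmul_add_left u v a
      map_smul' := fun c u => M.rsmul_csmul c u a }
  let L : M.carrier →L[ℂ] M.carrier :=
    L0.mkContinuous ‖a‖ (fun z => by rw [mul_comm]; exact norm_rsmul_le M z a)
  have hmin : M.idealSubmodule I ≤ Submodule.comap L0 (M.idealSubmodule I) := by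
    unfold RightHilbertModule.idealSubmodule
    apply Submodule.topologicalClosure_minimal
    · rw [Submodule.span_le]
      rintro w ⟨x, b, hb, rfl⟩
      simp only [Set.mem_preimage, SetLike.mem_coe, Submodule.mem_comap]
      show M.rsmul (M.rsmul x b) a ∈ _
      rw [M.rsmul_mul]
      exact mem_idealSubmodule_of_gen M x (hIright a b hb)
    · have h : (Submodule.comap L0 ((Submodule.span ℂ
          {z : M.carrier | ∃ x : M.carrier, ∃ a ∈ I, z = M.rsmul x a}).topologicalClosure) :
            Set M.carrier)
          = L ⁻¹' (((Submodule.span ℂ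
          {z : M.carrier | ∃ x : M.carrier, ∃ a ∈ I, z = M.rsmul x a}).topologicalClosure :
            Submodule ℂ M.carrier) : Set M.carrier) := rfl
      rw [h]
      exact (Submodule.isClosed_topologicalClosure _).preimage L.continuous
  exact hmin hz

lemma inner_left_mem_idealSubmodule
    (hIclosed : IsClosed (I : Set A))
    (hIleft : ∀ a x : A, x ∈ I → a * x ∈ I)
    (hIright : ∀ a x : A, x ∈ I → x * a ∈ I)
    {z : M.carrier} (hz : z ∈ M.idealSubmodule I) (η : M.carrier) :
    M.inner z η ∈ I := by
  let T : Submodule ℂ M.carrier :=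
    { carrier := {w | M.inner w η ∈ I}
      add_mem' := fun {u v} hu hv => by
        simp only [Set.mem_setOf_eq, M.inner_add_left] at *
        exact I.add_mem hu hv
      zero_mem' := by
        simp only [Set.mem_setOf_eq, inner_zero_left]
        exact I.zero_mem
      smul_mem' := fun c u hu => by
        simp only [Set.mem_setOf_eq, M.inner_smul_left] at *
        exact I.smul_mem _ hu }
  have hcont : Continuous (fun w => M.inner w η) := by
    have hL : LipschitzWith (⟨4 * ‖η‖, by positivity⟩ : NNReal) (fun w => M.inner w η) := by
      apply LipschitzWith.of_dist_le_mul
      intro u v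
      simp only [NNReal.coe_mk, dist_eq_norm]
      rw [← inner_sub_left]
      calc ‖M.inner (u - v) η‖ ≤ 4 * ‖u - v‖ * ‖η‖ := norm_inner_le M _ _
        _ = (4 * ‖η‖) * ‖u - v‖ := by ring
    exact hL.continuous
  have hclosedT : IsClosed (T : Set M.carrier) := by
    have h : (T : Set M.carrier) = (fun w => M.inner w η) ⁻¹' (I : Set A) := rfl
    rw [h]
    exact hIclosed.preimage hcont
  have hmin : M.idealSubmodule I ≤ T := by
    unfold RightHilbertModule.idealSubmodule
    refine Submodule.topologicalClosure_minimal _ ?_ hclosedT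
    rw [Submodule.span_le]
    rintro w ⟨x, b, hb, rfl⟩
    show M.inner (M.rsmul x b) η ∈ I
    rw [inner_rsmul_left]
    exact hIright _ (star b) (star_mem_of_closed hIclosed hIleft hIright hb)
  exact hmin hz

lemma inner_right_mem_idealSubmodule
    (hIclosed : IsClosed (I : Set A))
    (hIleft : ∀ a x : A, x ∈ I → a * x ∈ I)
    (hIright : ∀ a x : A, x ∈ I → x * a ∈ I)
    {z : M.carrier} (hz : z ∈ M.idealSubmodule I) (η : M.carrier) :
    M.inner η z ∈ I := by
  rw [← M.star_inner]
  exact star_mem_of_closed hIclosed hIleft hIright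
    (inner_left_mem_idealSubmodule M hIclosed hIleft hIright hz η)

end RightHilbertModule
end IdealSub
/-- Let `q : A → B` realize the quotient C*-algebra `A/I` (surjective *-hom
with kernel `I` and the quotient norm).  Then `H/HI` carries a right Hilbert
`A/I`-module structure with inner product `⟨ξ + HI, η + HI⟩ = ⟨ξ,η⟩_A + I`
(stated on representatives: it is well defined, `A/I`-sesquilinear, positive,
and non-degenerate modulo `HI`), the Hilbert module norm equals the Banach
quotient norm, and the quotient is complete. -/
theorem quotient_hilbert_module_structure {A B : Type*}
    [CStarAlgebra A] [PartialOrder A] [StarOrderedRing A]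
    [CStarAlgebra B] [PartialOrder B] [StarOrderedRing B]
    (M : RightHilbertModule A)
    (I : Submodule ℂ A) (hIclosed : IsClosed (I : Set A))
    (hIleft : ∀ a x : A, x ∈ I → a * x ∈ I)
    (hIright : ∀ a x : A, x ∈ I → x * a ∈ I)
    (q : A →⋆ₐ[ℂ] B) (hqsurj : Function.Surjective q)
    (hker : ∀ a : A, q a = 0 ↔ a ∈ I)
    (hqnorm : ∀ a : A, ‖q a‖ = sInf {r : ℝ | ∃ x ∈ I, r = ‖a + x‖}) :
    -- the inner product descends to the quotient `H/HI`
    (∀ ξ ξ' η : M.carrier, ξ - ξ' ∈ M.idealSubmodule I →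
        q (M.inner ξ η) = q (M.inner ξ' η)) ∧
    (∀ ξ η η' : M.carrier, η - η' ∈ M.idealSubmodule I →
        q (M.inner ξ η) = q (M.inner ξ η')) ∧
    -- the right `A/I`-action descends to the quotient
    (∀ (ξ ξ' : M.carrier) (a a' : A), ξ - ξ' ∈ M.idealSubmodule I → q a = q a' →
        M.rsmul ξ a - M.rsmul ξ' a' ∈ M.idealSubmodule I) ∧
    -- `A/I`-linearity of the inner product in the second variable
    (∀ (ξ η : M.carrier) (a : A),
        q (M.inner ξ (M.rsmul η a)) = q (M.inner ξ η) * q a) ∧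
    (∀ ξ η : M.carrier, star (q (M.inner ξ η)) = q (M.inner η ξ)) ∧
    -- positivity and non-degeneracy modulo `HI`
    (∀ ξ : M.carrier, 0 ≤ q (M.inner ξ ξ)) ∧
    (∀ ξ : M.carrier, q (M.inner ξ ξ) = 0 → ξ ∈ M.idealSubmodule I) ∧
    -- the induced Hilbert module norm equals the Banach space quotient norm
    (∀ ξ : M.carrier,
        (sInf {r : ℝ | ∃ y ∈ M.idealSubmodule I, r = ‖ξ + y‖}) ^ 2 =
          ‖q (M.inner ξ ξ)‖) ∧
    CompleteSpace (M.carrier ⧸ M.idealSubmodule I) := by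
  have hstar : ∀ {a : A}, a ∈ I → star a ∈ I := fun ha =>
    star_mem_of_closed hIclosed hIleft hIright ha
  have hqle : ∀ x : A, ‖q x‖ ≤ ‖x‖ := by
    intro x
    rw [hqnorm]
    exact csInf_le ⟨0, by rintro r ⟨w, hw, rfl⟩; exact norm_nonneg _⟩
      ⟨0, I.zero_mem, by simp⟩
  have hqd : ∀ {x y : A}, x - y ∈ I → q x = q y := by
    intro x y h
    have h0 : q (x - y) = 0 := (hker _).2 h
    rwa [map_sub, sub_eq_zero] at h0
  have hinnerL : ∀ {z : M.carrier}, z ∈ M.idealSubmodule I → ∀ η, M.inner z η ∈ I :=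
    fun hz η => M.inner_left_mem_idealSubmodule hIclosed hIleft hIright hz η
  have hinnerR : ∀ {z : M.carrier}, z ∈ M.idealSubmodule I → ∀ η, M.inner η z ∈ I :=
    fun hz η => M.inner_right_mem_idealSubmodule hIclosed hIleft hIright hz η
  refine ⟨?_, ?_, ?_, ?_, ?_, ?_, ?_, ?_, inferInstance⟩
  · -- inner descends in the first variable
    intro ξ ξ' η h
    apply hqd
    rw [← M.inner_sub_left]
    exact hinnerL h η
  · -- inner descends in the second variable
    intro ξ η η' h
    apply hqd
    rw [← M.inner_sub_right]
    exact hinnerR h ξ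
  · -- the action descends
    intro ξ ξ' a a' hξ hq
    have haa' : a - a' ∈ I := (hker _).1 (by rw [map_sub, hq, sub_self])
    have hdecomp : M.rsmul ξ a - M.rsmul ξ' a'
        = M.rsmul (ξ - ξ') a + M.rsmul ξ' (a - a') := by
      rw [M.rsmul_sub_left, M.rsmul_sub_right]
      abel
    rw [hdecomp]
    exact (M.idealSubmodule I).add_mem
      (M.rsmul_mem_idealSubmodule hIright hξ a)
      (M.mem_idealSubmodule_of_gen ξ' haa')
  · -- A/I-linearity
    intro ξ η a
    rw [M.inner_rsmul_right, map_mul]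
  · -- star compatibility
    intro ξ η
    rw [← map_star, M.star_inner]
  · -- positivity
    intro ξ
    have ha := M.inner_self_nonneg ξ
    have h1 : M.inner ξ ξ = star (CFC.sqrt (M.inner ξ ξ)) * CFC.sqrt (M.inner ξ ξ) := by
      rw [(IsSelfAdjoint.of_nonneg (CFC.sqrt_nonneg _)).star_eq, CFC.sqrt_mul_sqrt_self _ ha]
    rw [h1, map_mul, map_star]
    exact star_mul_self_nonneg _
  · -- non-degeneracy modulo HI
    intro ξ h
    have haI : M.inner ξ ξ ∈ I := (hker _).1 h
    have ha := M.inner_self_nonneg ξ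
    rw [← SetLike.mem_coe, ← (M.idealSubmodule_isClosed (I := I)).closure_eq]
    apply Metric.mem_closure_iff.mpr
    intro ε hε
    obtain ⟨n, hn0, hinv⟩ := exists_inv_lt (show (0:ℝ) < ε^2 by positivity)
    obtain ⟨e, heI, _, _, hesa, _, hbound⟩ := core_aux hIright ha haI n hn0
    refine ⟨M.rsmul ξ e, M.mem_idealSubmodule_of_gen ξ heI, ?_⟩
    rw [dist_eq_norm]
    have h2 := M.norm_sub_rsmul ξ e hesa
    nlinarith [norm_nonneg (ξ - M.rsmul ξ e), hε]
  · -- the norm identity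
    intro ξ
    have ha : 0 ≤ M.inner ξ ξ := M.inner_self_nonneg ξ
    have hastar : star (M.inner ξ ξ) = M.inner ξ ξ := M.star_inner ξ ξ
    set D := {r : ℝ | ∃ y ∈ M.idealSubmodule I, r = ‖ξ + y‖} with hDdef
    have hDne : D.Nonempty := ⟨‖ξ‖, 0, (M.idealSubmodule I).zero_mem, by simp⟩
    have hDbdd : BddBelow D := ⟨0, by rintro r ⟨y, hy, rfl⟩; exact norm_nonneg _⟩
    have hD0 : 0 ≤ sInf D := le_csInf hDne (by rintro r ⟨y, hy, rfl⟩; exact norm_nonneg _)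
    have hge : ‖q (M.inner ξ ξ)‖ ≤ (sInf D)^2 := by
      have hsq : Real.sqrt ‖q (M.inner ξ ξ)‖ ≤ sInf D := by
        apply le_csInf hDne
        rintro r ⟨y, hy, rfl⟩
        have hmem : M.inner (ξ + y) (ξ + y) - M.inner ξ ξ ∈ I := by
          have hexp : M.inner (ξ + y) (ξ + y) - M.inner ξ ξ
              = M.inner y (ξ + y) + M.inner ξ y := by
            rw [M.inner_add_left, M.inner_add_right]
            abel
          rw [hexp]
          exact I.add_mem (hinnerL hy (ξ + y)) (hinnerR hy ξ)
        have hq2 : q (M.inner ξ ξ) = q (M.inner (ξ + y) (ξ + y)) := (hqd hmem).symm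
        have h3 : ‖q (M.inner ξ ξ)‖ ≤ ‖ξ + y‖^2 := by
          rw [hq2]
          calc ‖q (M.inner (ξ + y) (ξ + y))‖ ≤ ‖M.inner (ξ + y) (ξ + y)‖ := hqle _
            _ = ‖ξ + y‖^2 := (M.norm_sq_eq _).symm
        calc Real.sqrt ‖q (M.inner ξ ξ)‖ ≤ Real.sqrt (‖ξ + y‖^2) := Real.sqrt_le_sqrt h3
          _ = ‖ξ + y‖ := by rw [Real.sqrt_sq (norm_nonneg _)]
      calc ‖q (M.inner ξ ξ)‖ = (Real.sqrt ‖q (M.inner ξ ξ)‖)^2 :=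
          (Real.sq_sqrt (norm_nonneg _)).symm
        _ ≤ (sInf D)^2 := pow_le_pow_left₀ (Real.sqrt_nonneg _) hsq 2
    have key : ∀ ε : ℝ, 0 < ε → (sInf D)^2 ≤ ‖q (M.inner ξ ξ)‖ + ε := by
      intro ε hε
      have hEne : {r : ℝ | ∃ x ∈ I, r = ‖M.inner ξ ξ + x‖}.Nonempty :=
        ⟨‖M.inner ξ ξ‖, 0, I.zero_mem, by simp⟩
      have hlt : sInf {r : ℝ | ∃ x ∈ I, r = ‖M.inner ξ ξ + x‖}
          < ‖q (M.inner ξ ξ)‖ + ε/4 := by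
        rw [← hqnorm]; linarith
      obtain ⟨r, ⟨x, hxI, rfl⟩, hr⟩ := exists_lt_of_csInf_lt hEne hlt
      set y : A := (2:ℂ)⁻¹ • (x + star x) with hy
      have hyI : y ∈ I := I.smul_mem _ (I.add_mem hxI (hstar hxI))
      have hystar : star y = y := by
        rw [hy, star_smul, star_add, star_star]
        simp [add_comm]
      have hay : M.inner ξ ξ + y = (2:ℂ)⁻¹ • ((M.inner ξ ξ + x) + star (M.inner ξ ξ + x)) := by
        rw [star_add, hastar, hy]
        module
      have hayn : ‖M.inner ξ ξ + y‖ ≤ ‖M.inner ξ ξ + x‖ := by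
        rw [hay, norm_smul]
        have h2 : ‖((2:ℂ))⁻¹‖ = 2⁻¹ := by norm_num
        rw [h2]
        calc 2⁻¹ * ‖(M.inner ξ ξ + x) + star (M.inner ξ ξ + x)‖
            ≤ 2⁻¹ * (‖M.inner ξ ξ + x‖ + ‖star (M.inner ξ ξ + x)‖) := by
              gcongr; exact norm_add_le _ _
          _ = ‖M.inner ξ ξ + x‖ := by rw [norm_star]; ring
      have hbI : y * y ∈ I := hIleft y y hyI
      have hbnn : 0 ≤ y * y := by
        have h0 := star_mul_self_nonneg y
        rwa [hystar] at h0
      obtain ⟨n, hn0, hinv⟩ := exists_inv_lt (show (0:ℝ) < (ε/4)^2 by positivity)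
      obtain ⟨e, heI, _, _, hesa, h1ene, hbound⟩ := core_aux hIright hbnn hbI n hn0
      have hyw : ‖y * ((1:A) - e)‖^2 = ‖((1:A) - e) * (y * y) * ((1:A) - e)‖ := by
        rw [sq, ← CStarRing.norm_star_mul_self]
        congr 1
        rw [star_mul, ((IsSelfAdjoint.one (R := A)).sub hesa).star_eq, hystar]
        noncomm_ring
      have hywlt : ‖y * ((1:A) - e)‖ < ε/4 := by
        nlinarith [norm_nonneg (y * ((1:A) - e)), hε]
      have h8 : ‖((1:A) - e) * y * ((1:A) - e)‖ ≤ ‖y * ((1:A) - e)‖ := by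
        rw [mul_assoc]
        calc ‖((1:A) - e) * (y * ((1:A) - e))‖
            ≤ ‖(1:A) - e‖ * ‖y * ((1:A) - e)‖ := norm_mul_le _ _
          _ ≤ 1 * ‖y * ((1:A) - e)‖ := by gcongr
          _ = ‖y * ((1:A) - e)‖ := one_mul _
      have h7 : ‖((1:A) - e) * (M.inner ξ ξ + y) * ((1:A) - e)‖ ≤ ‖M.inner ξ ξ + y‖ := by
        calc ‖((1:A) - e) * (M.inner ξ ξ + y) * ((1:A) - e)‖
            ≤ ‖((1:A) - e) * (M.inner ξ ξ + y)‖ * ‖(1:A) - e‖ := norm_mul_le _ _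
          _ ≤ (‖(1:A) - e‖ * ‖M.inner ξ ξ + y‖) * ‖(1:A) - e‖ := by
              gcongr; exact norm_mul_le _ _
          _ ≤ (1 * ‖M.inner ξ ξ + y‖) * 1 := by gcongr
          _ = ‖M.inner ξ ξ + y‖ := by ring
      have hdecomp : ((1:A) - e) * (M.inner ξ ξ) * ((1:A) - e)
          = ((1:A) - e) * (M.inner ξ ξ + y) * ((1:A) - e)
            - ((1:A) - e) * y * ((1:A) - e) := by
        noncomm_ring
      have hxe : ‖ξ - M.rsmul ξ e‖^2 ≤ ‖q (M.inner ξ ξ)‖ + ε := by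
        rw [M.norm_sub_rsmul ξ e hesa, hdecomp]
        have htr := norm_sub_le (((1:A) - e) * (M.inner ξ ξ + y) * ((1:A) - e))
          (((1:A) - e) * y * ((1:A) - e))
        linarith
      have hmemD : ‖ξ - M.rsmul ξ e‖ ∈ D :=
        ⟨-(M.rsmul ξ e), (M.idealSubmodule I).neg_mem (M.mem_idealSubmodule_of_gen ξ heI),
          by rw [sub_eq_add_neg]⟩
      have hinf : sInf D ≤ ‖ξ - M.rsmul ξ e‖ := csInf_le hDbdd hmemD
      calc (sInf D)^2 ≤ ‖ξ - M.rsmul ξ e‖^2 := pow_le_pow_left₀ hD0 hinf 2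
        _ ≤ ‖q (M.inner ξ ξ)‖ + ε := hxe
    have hle : (sInf D)^2 ≤ ‖q (M.inner ξ ξ)‖ := by
      by_contra hcon
      push_neg at hcon
      have h2 := key (((sInf D)^2 - ‖q (M.inner ξ ξ)‖)/2) (by linarith)
      linarith
    exact le_antisymm hle hge
end

section
/- Every C*-subalgebra of an exact C*-algebra is exact. -/
/-- A finite-family approximate-unit lemma for a closed two-sided ideal `I` in a
unital C*-algebra: given finitely many elements of `I`, there is `e ∈ I` of norm
at most one with `u i * e` close to `u i` for all `i`. -/
lemma cstar_approx_unit {B : Type*} [CStarAlgebra B] (I : Submodule ℂ B)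
    (hIleft : ∀ b x : B, x ∈ I → b * x ∈ I)
    (hIright : ∀ b x : B, x ∈ I → x * b ∈ I)
    {n : ℕ} (u : Fin n → B) (hu : ∀ i, u i ∈ I) {δ : ℝ} (hδ : 0 < δ) :
    ∃ e ∈ I, ‖e‖ ≤ 1 ∧ ∀ i, ‖u i - u i * e‖ ≤ Real.sqrt δ := by
  letI : PartialOrder B := CStarAlgebra.spectralOrder B
  letI : StarOrderedRing B := CStarAlgebra.spectralOrderedRing B
  set h : B := ∑ i, star (u i) * u i with hhdef
  have hh : (0 : B) ≤ h := Finset.sum_nonneg fun i _ => star_mul_self_nonneg _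
  have hsa : IsSelfAdjoint h := .of_nonneg hh
  have hspec : ∀ x ∈ spectrum ℝ h, 0 ≤ x := spectrum_nonneg_of_nonneg hh
  have hpos : ∀ x ∈ spectrum ℝ h, 0 < x + δ := fun x hx => by linarith [hspec x hx]
  have hgc : ContinuousOn (fun x : ℝ => (x + δ)⁻¹) (spectrum ℝ h) :=
    ContinuousOn.inv₀ (by fun_prop) fun x hx => (hpos x hx).ne'
  have hfc : ContinuousOn (fun x : ℝ => x * (x + δ)⁻¹) (spectrum ℝ h) :=
    ContinuousOn.mul (by fun_prop) hgc
  have h1fc : ContinuousOn (fun x : ℝ => 1 - x * (x + δ)⁻¹) (spectrum ℝ h) :=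
    continuousOn_const.sub hfc
  set e : B := cfc (fun x : ℝ => x * (x + δ)⁻¹) h with hedef
  have hesa : IsSelfAdjoint e := cfc_predicate _ h
  refine ⟨e, ?_, ?_, ?_⟩
  · have hhI : h ∈ I := Submodule.sum_mem _ fun i _ => hIleft _ _ (hu i)
    have : e = h * cfc (fun x : ℝ => (x + δ)⁻¹) h := by
      rw [hedef, cfc_mul (fun x : ℝ => x) (fun x : ℝ => (x + δ)⁻¹) h (by fun_prop) hgc,
        cfc_id' ℝ h]
    rw [this]
    exact hIright _ _ hhI
  · refine norm_cfc_le zero_le_one fun x hx => ?_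
    have h0 := hspec x hx
    have h1 := hpos x hx
    rw [Real.norm_eq_abs, abs_of_nonneg (by positivity), ← div_eq_mul_inv]
    exact (div_le_one h1).mpr (by linarith)
  · intro i
    have h1e : (1 : B) - e = cfc (fun x : ℝ => 1 - x * (x + δ)⁻¹) h := by
      rw [cfc_sub (fun _ : ℝ => (1 : ℝ)) (fun x : ℝ => x * (x + δ)⁻¹) h (by fun_prop) hfc,
        cfc_const_one ℝ h]
    have h1esa : IsSelfAdjoint ((1 : B) - e) := (IsSelfAdjoint.one B).sub hesa
    have hkey : ‖u i - u i * e‖ ^ 2 ≤ δ := by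
      have hrw : u i - u i * e = u i * (1 - e) := by rw [mul_sub, mul_one]
      have hnsq : ‖u i - u i * e‖ ^ 2
          = ‖star (u i * (1 - e)) * (u i * (1 - e))‖ := by
        rw [hrw, CStarRing.norm_star_mul_self]; ring
      have hform : star (u i * (1 - e)) * (u i * (1 - e))
          = (1 - e) * (star (u i) * u i) * (1 - e) := by
        rw [star_mul, h1esa.star_eq]; noncomm_ring
      have hle : star (u i) * u i ≤ h := by
        rw [hhdef, ← Finset.sum_erase_add _ _ (Finset.mem_univ i)]
        exact le_add_of_nonneg_left <|
          Finset.sum_nonneg fun j _ => star_mul_self_nonneg _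
      have hconj : (1 - e) * (star (u i) * u i) * (1 - e) ≤ (1 - e) * h * (1 - e) :=
        h1esa.conjugate_le_conjugate hle
      have hnonneg : (0 : B) ≤ (1 - e) * (star (u i) * u i) * (1 - e) := by
        rw [← hform]; exact star_mul_self_nonneg _
      have hnorm1 : ‖(1 - e) * (star (u i) * u i) * (1 - e)‖ ≤ ‖(1 - e) * h * (1 - e)‖ :=
        CStarAlgebra.norm_le_norm_of_nonneg_of_le hnonneg hconj
      have hprod : (1 - e) * h * (1 - e)
          = cfc (fun x : ℝ => (1 - x * (x + δ)⁻¹) * x * (1 - x * (x + δ)⁻¹)) h := by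
        rw [cfc_mul (fun x : ℝ => (1 - x * (x + δ)⁻¹) * x) (fun x : ℝ => 1 - x * (x + δ)⁻¹)
            h (h1fc.mul (by fun_prop)) h1fc,
          cfc_mul (fun x : ℝ => 1 - x * (x + δ)⁻¹) (fun x : ℝ => x) h h1fc (by fun_prop),
          cfc_id' ℝ h, ← h1e]
      have hnorm2 : ‖(1 - e) * h * (1 - e)‖ ≤ δ := by
        rw [hprod]
        refine norm_cfc_le hδ.le fun x hx => ?_
        have h0 := hspec x hx
        have h1 := hpos x hx
        have hrw1 : 1 - x * (x + δ)⁻¹ = δ * (x + δ)⁻¹ := by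
          field_simp
          ring
        rw [hrw1, Real.norm_eq_abs, abs_of_nonneg (by positivity)]
        have e1 : δ * (x + δ)⁻¹ ≤ 1 := by
          rw [← div_eq_mul_inv]; exact (div_le_one h1).mpr (by linarith)
        have e2 : x * (x + δ)⁻¹ ≤ 1 := by
          rw [← div_eq_mul_inv]; exact (div_le_one h1).mpr (by linarith)
        have hr : δ * (x + δ)⁻¹ * x * (δ * (x + δ)⁻¹)
            = (δ * (x + δ)⁻¹) * (x * (x + δ)⁻¹) * δ := by ring
        rw [hr]
        calc (δ * (x + δ)⁻¹) * (x * (x + δ)⁻¹) * δ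
            ≤ 1 * 1 * δ := by
              have p1 : 0 ≤ δ * (x + δ)⁻¹ := by positivity
              have p2 : 0 ≤ x * (x + δ)⁻¹ := by positivity
              gcongr
          _ = δ := by ring
      calc ‖u i - u i * e‖ ^ 2 = ‖star (u i * (1 - e)) * (u i * (1 - e))‖ := hnsq
        _ = ‖(1 - e) * (star (u i) * u i) * (1 - e)‖ := by rw [hform]
        _ ≤ ‖(1 - e) * h * (1 - e)‖ := hnorm1
        _ ≤ δ := hnorm2
    calc ‖u i - u i * e‖ = Real.sqrt (‖u i - u i * e‖ ^ 2) :=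
          (Real.sqrt_sq (norm_nonneg _)).symm
      _ ≤ Real.sqrt δ := Real.sqrt_le_sqrt hkey



/-- Exactness passes to C*-subalgebras.  Exactness of a C*-algebra `A` is
expressed via the minimal tensor products (given as data: C*-algebras with
elementary-tensor maps of cross norm `‖a ⊗ b‖ = ‖a‖‖b‖`, dense span, and
contractive slice maps, the characteristic property of the minimal tensor
norm): for every short exact sequence `0 → I → B → C → 0`, the kernel of the
induced map `A ⊗ B → A ⊗ C` is `A ⊗ I`.  Given a closed *-subalgebra
`A₀ ⊆ A`, whose minimal tensor products embed isometrically and compatibly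
into those of `A`, the kernel of `A₀ ⊗ B → A₀ ⊗ C` is `A₀ ⊗ I`; that is,
`A₀` is exact. -/
theorem exact_of_subalgebra {A B C : Type*}
    [CStarAlgebra A] [CStarAlgebra B] [CStarAlgebra C]
    -- the C*-subalgebra `A₀ ⊆ A`
    (A₀ : StarSubalgebra ℂ A) (hA₀ : IsClosed (A₀ : Set A))
    -- the short exact sequence `0 → I → B → C → 0`
    (I : Submodule ℂ B) (hIclosed : IsClosed (I : Set B))
    (hIleft : ∀ b x : B, x ∈ I → b * x ∈ I)
    (hIright : ∀ b x : B, x ∈ I → x * b ∈ I)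
    (q : B →⋆ₐ[ℂ] C) (hqsurj : Function.Surjective q)
    (hker : ∀ b : B, q b = 0 ↔ b ∈ I)
    (hqnorm : ∀ b : B, ‖q b‖ = sInf {r : ℝ | ∃ x ∈ I, r = ‖b + x‖})
    -- the minimal tensor product `TAB = A ⊗ B`
    (TAB : Type*) [CStarAlgebra TAB] (tAB : A → B → TAB)
    (htAB_addl : ∀ (a a' : A) (b : B), tAB (a + a') b = tAB a b + tAB a' b)
    (htAB_addr : ∀ (a : A) (b b' : B), tAB a (b + b') = tAB a b + tAB a b')
    (htAB_mul : ∀ (a a' : A) (b b' : B),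
        tAB a b * tAB a' b' = tAB (a * a') (b * b'))
    (htAB_star : ∀ (a : A) (b : B), star (tAB a b) = tAB (star a) (star b))
    (htAB_norm : ∀ (a : A) (b : B), ‖tAB a b‖ = ‖a‖ * ‖b‖)
    (htAB_dense : (Submodule.span ℂ
        (Set.range fun p : A × B => tAB p.1 p.2)).topologicalClosure = ⊤)
    -- contractive slice maps on `A ⊗ B` (minimality of the tensor norm)
    (slice : (A →L[ℂ] ℂ) → (TAB →L[ℂ] B))
    (hslice : ∀ (φ : A →L[ℂ] ℂ) (a : A) (b : B), slice φ (tAB a b) = φ a • b)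
    (hslice_norm : ∀ φ : A →L[ℂ] ℂ, ‖slice φ‖ ≤ ‖φ‖)
    -- the minimal tensor product `TAC = A ⊗ C`
    (TAC : Type*) [CStarAlgebra TAC] (tAC : A → C → TAC)
    (htAC_mul : ∀ (a a' : A) (c c' : C),
        tAC a c * tAC a' c' = tAC (a * a') (c * c'))
    (htAC_star : ∀ (a : A) (c : C), star (tAC a c) = tAC (star a) (star c))
    (htAC_norm : ∀ (a : A) (c : C), ‖tAC a c‖ = ‖a‖ * ‖c‖)
    (htAC_dense : (Submodule.span ℂ
        (Set.range fun p : A × C => tAC p.1 p.2)).topologicalClosure = ⊤)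
    -- the induced map `π = id ⊗ q : A ⊗ B → A ⊗ C`
    (π : TAB →⋆ₐ[ℂ] TAC) (hπ : ∀ (a : A) (b : B), π (tAB a b) = tAC a (q b))
    -- exactness of `A`: `ker π = A ⊗ I`
    (hexact : {x : TAB | π x = 0} = ((Submodule.span ℂ
        {z : TAB | ∃ a : A, ∃ u ∈ I, z = tAB a u}).topologicalClosure : Set TAB))
    -- the minimal tensor product `T0B = A₀ ⊗ B` with its embedding into `A ⊗ B`
    (T0B : Type*) [CStarAlgebra T0B] (t0B : A₀ → B → T0B)
    (ht0B_mul : ∀ (a a' : A₀) (b b' : B),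
        t0B a b * t0B a' b' = t0B (a * a') (b * b'))
    (ht0B_star : ∀ (a : A₀) (b : B), star (t0B a b) = t0B (star a) (star b))
    (ht0B_norm : ∀ (a : A₀) (b : B), ‖t0B a b‖ = ‖(a : A)‖ * ‖b‖)
    (ht0B_dense : (Submodule.span ℂ
        (Set.range fun p : A₀ × B => t0B p.1 p.2)).topologicalClosure = ⊤)
    (j : T0B →⋆ₐ[ℂ] TAB) (hj_iso : ∀ x : T0B, ‖j x‖ = ‖x‖)
    (hj : ∀ (a : A₀) (b : B), j (t0B a b) = tAB (a : A) b)
    -- the minimal tensor product `T0C = A₀ ⊗ C` with its embedding into `A ⊗ C`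
    (T0C : Type*) [CStarAlgebra T0C] (t0C : A₀ → C → T0C)
    (ht0C_mul : ∀ (a a' : A₀) (c c' : C),
        t0C a c * t0C a' c' = t0C (a * a') (c * c'))
    (ht0C_star : ∀ (a : A₀) (c : C), star (t0C a c) = t0C (star a) (star c))
    (ht0C_norm : ∀ (a : A₀) (c : C), ‖t0C a c‖ = ‖(a : A)‖ * ‖c‖)
    (ht0C_dense : (Submodule.span ℂ
        (Set.range fun p : A₀ × C => t0C p.1 p.2)).topologicalClosure = ⊤)
    (j' : T0C →⋆ₐ[ℂ] TAC) (hj'_iso : ∀ x : T0C, ‖j' x‖ = ‖x‖)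
    (hj' : ∀ (a : A₀) (c : C), j' (t0C a c) = tAC (a : A) c)
    -- the induced map `π₀ = id ⊗ q : A₀ ⊗ B → A₀ ⊗ C` and the commuting square
    (π₀ : T0B →⋆ₐ[ℂ] T0C) (hπ₀ : ∀ (a : A₀) (b : B), π₀ (t0B a b) = t0C a (q b))
    (hsquare : ∀ x : T0B, j' (π₀ x) = π (j x)) :
    -- conclusion: `A₀` is exact, i.e. `ker π₀ = A₀ ⊗ I`
    {x : T0B | π₀ x = 0} = ((Submodule.span ℂ
        {z : T0B | ∃ a : A₀, ∃ u ∈ I, z = t0B a u}).topologicalClosure : Set T0B) := by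
  classical
  set M₀ : Submodule ℂ T0B :=
    Submodule.span ℂ {z : T0B | ∃ a : A₀, ∃ u ∈ I, z = t0B a u} with hM₀
  have hπ₀le : ∀ y : T0B, ‖π₀ y‖ ≤ ‖y‖ := fun y =>
    NonUnitalStarAlgHom.norm_apply_le π₀ y
  have hπ₀cont : Continuous π₀ :=
    AddMonoidHomClass.continuous_of_bound π₀ 1 fun y => by simpa [one_mul] using hπ₀le y
  have hclosed : IsClosed (M₀.topologicalClosure : Set T0B) :=
    Submodule.isClosed_topologicalClosure _
  apply Set.Subset.antisymm
  · -- hard direction: the kernel is contained in `A₀ ⊗ I`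
    intro x hx
    have hx0 : π₀ x = 0 := hx
    have hmem : x ∈ closure (M₀.topologicalClosure : Set T0B) →
        x ∈ (M₀.topologicalClosure : Set T0B) := fun hm => by
      rwa [hclosed.closure_eq] at hm
    apply hmem
    rw [Metric.mem_closure_iff]
    intro ε hε
    have hπjx : π (j x) = 0 := by rw [← hsquare, hx0, map_zero]
    have hjx : j x ∈ (Submodule.span ℂ
        {z : TAB | ∃ a : A, ∃ u ∈ I, z = tAB a u}).topologicalClosure := by
      have h1 : j x ∈ {y : TAB | π y = 0} := hπjx
      rw [hexact] at h1
      exact h1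
    have hjx' : j x ∈ closure ((Submodule.span ℂ
        {z : TAB | ∃ a : A, ∃ u ∈ I, z = tAB a u}) : Set TAB) := by
      rw [← Submodule.topologicalClosure_coe]; exact hjx
    obtain ⟨w, hwmem, hwdist⟩ := Metric.mem_closure_iff.mp hjx' (ε/4) (by positivity)
    obtain ⟨m, c, z, hwsum⟩ := Submodule.mem_span_set'.mp hwmem
    choose a uu huI hz using fun i : Fin m => (z i).2
    set Cst : ℝ := ∑ i, ‖c i‖ * ‖a i‖ with hCst
    have hCst0 : 0 ≤ Cst := Finset.sum_nonneg fun i _ => by positivity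
    set η : ℝ := (ε/4) / (1 + Cst) with hη
    have hηpos : 0 < η := by positivity
    obtain ⟨e, heI, hene, heapp⟩ :=
      cstar_approx_unit I hIleft hIright uu huI (δ := η ^ 2) (by positivity)
    rw [Real.sqrt_sq hηpos.le] at heapp
    refine ⟨x * t0B 1 e, ?_, ?_⟩
    · -- membership of the approximant in `A₀ ⊗ I`
      have hsub : (Submodule.span ℂ
            (Set.range fun p : A₀ × B => t0B p.1 p.2)).topologicalClosure
          ≤ M₀.topologicalClosure.comap (LinearMap.mulRight ℂ (t0B 1 e)) := by
        apply Submodule.topologicalClosure_minimal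
        · rw [Submodule.span_le]
          rintro _ ⟨⟨a0, b⟩, rfl⟩
          simp only [SetLike.mem_coe, Submodule.mem_comap, LinearMap.mulRight_apply]
          rw [ht0B_mul, mul_one]
          exact Submodule.le_topologicalClosure _
            (Submodule.subset_span ⟨a0, b * e, hIleft b e heI, rfl⟩)
        · have hpre : ((M₀.topologicalClosure.comap
                (LinearMap.mulRight ℂ (t0B 1 e))) : Set T0B)
              = (fun v : T0B => v * t0B 1 e) ⁻¹' (M₀.topologicalClosure : Set T0B) := rfl
          rw [hpre]
          exact hclosed.preimage (continuous_id.mul continuous_const)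
      have hx' : x ∈ (Submodule.span ℂ
          (Set.range fun p : A₀ × B => t0B p.1 p.2)).topologicalClosure := by
        rw [ht0B_dense]; exact Submodule.mem_top
      exact Submodule.mem_comap.mp (hsub hx')
    · -- distance estimate
      rw [dist_eq_norm]
      have hco : ((1 : A₀) : A) = 1 := OneMemClass.coe_one A₀
      have hje : j (t0B 1 e) = tAB 1 e := by rw [hj, hco]
      have hkey : ‖x - x * t0B 1 e‖ = ‖j x - j x * tAB 1 e‖ := by
        rw [← hj_iso, map_sub, map_mul, hje]
      have hwmul : w - w * tAB 1 e = ∑ i, c i • tAB (a i) (uu i - uu i * e) := by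
        rw [← hwsum, Finset.sum_mul, ← Finset.sum_sub_distrib]
        refine Finset.sum_congr rfl fun i _ => ?_
        rw [hz i, smul_mul_assoc, ← smul_sub, htAB_mul, mul_one]
        congr 1
        have h3 : tAB (a i) (uu i)
            = tAB (a i) (uu i - uu i * e) + tAB (a i) (uu i * e) := by
          rw [← htAB_addr]; congr 1; abel
        rw [h3]; abel
      have hwbound : ‖w - w * tAB 1 e‖ ≤ ε/4 := by
        rw [hwmul]
        have hne : (1 : ℝ) + Cst ≠ 0 := by positivity
        calc ‖∑ i, c i • tAB (a i) (uu i - uu i * e)‖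
            ≤ ∑ i, ‖c i • tAB (a i) (uu i - uu i * e)‖ := norm_sum_le _ _
          _ = ∑ i, ‖c i‖ * (‖a i‖ * ‖uu i - uu i * e‖) := by
              simp only [norm_smul, htAB_norm]
          _ ≤ ∑ i, ‖c i‖ * (‖a i‖ * η) := by
              refine Finset.sum_le_sum fun i _ => ?_
              exact mul_le_mul_of_nonneg_left
                (mul_le_mul_of_nonneg_left (heapp i) (norm_nonneg _)) (norm_nonneg _)
          _ = Cst * η := by
              simp only [hCst, Finset.sum_mul, mul_assoc]
          _ ≤ (1 + Cst) * η := by nlinarith [hηpos.le]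
          _ = ε/4 := by rw [hη]; field_simp
      have hmnorm : ‖tAB (1 : A) e‖ ≤ 1 := by
        have h1 : ‖(1 : A)‖ * ‖(1 : A)‖ = ‖(1 : A)‖ := by
          conv_lhs => rw [← CStarRing.norm_star_mul_self (x := (1 : A))]
          rw [star_one, one_mul]
        have h1le : ‖(1 : A)‖ ≤ 1 := by nlinarith [norm_nonneg (1 : A)]
        rw [htAB_norm]
        calc ‖(1 : A)‖ * ‖e‖ ≤ 1 * 1 :=
              mul_le_mul h1le hene (norm_nonneg _) zero_le_one
          _ = 1 := one_mul 1
      have htri : ‖j x - j x * tAB 1 e‖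
          ≤ ‖j x - w‖ + ‖w - w * tAB 1 e‖ + ‖(w - j x) * tAB 1 e‖ := by
        have hsplit : j x - j x * tAB 1 e
            = (j x - w) + (w - w * tAB 1 e) + (w - j x) * tAB 1 e := by
          noncomm_ring
        rw [hsplit]
        exact norm_add₃_le
      have hdw : ‖j x - w‖ < ε/4 := by rw [← dist_eq_norm]; exact hwdist
      have hlast : ‖(w - j x) * tAB 1 e‖ ≤ ε/4 := by
        calc ‖(w - j x) * tAB 1 e‖ ≤ ‖w - j x‖ * ‖tAB 1 e‖ := norm_mul_le _ _
          _ ≤ (ε/4) * 1 := by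
              refine mul_le_mul ?_ hmnorm (norm_nonneg _) (by positivity)
              rw [norm_sub_rev]; exact hdw.le
          _ = ε/4 := mul_one _
      rw [hkey]
      have := htri
      linarith
  · -- easy direction: `A₀ ⊗ I` is contained in the kernel
    intro x hx
    set N : Submodule ℂ T0B := LinearMap.ker π₀.toAlgHom.toLinearMap with hN
    have hNc : IsClosed (N : Set T0B) := by
      have hpre : (N : Set T0B) = π₀ ⁻¹' {0} := by
        ext y; simp [hN, LinearMap.mem_ker]
      rw [hpre]
      exact isClosed_singleton.preimage hπ₀cont
    have hle : M₀ ≤ N := by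
      rw [hM₀, Submodule.span_le]
      rintro _ ⟨a0, u, huI, rfl⟩
      simp only [SetLike.mem_coe, LinearMap.mem_ker]
      show π₀ (t0B a0 u) = 0
      rw [hπ₀, (hker u).mpr huI]
      have h0 : ‖t0C a0 (0 : C)‖ = 0 := by rw [ht0C_norm]; simp
      exact norm_eq_zero.mp h0
    have hmem : x ∈ N := Submodule.topologicalClosure_minimal M₀ hle hNc hx
    simpa [hN, LinearMap.mem_ker] using hmem
end
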